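/- Let k, l ≥ 1 with k + l ≥ 2. In the braid group B_{k+l}: (i) β_{k+l} = r_l(β_k) · β_l · t_{k,l}; (ii) β_{k+l} = t_{l,k} · r_l(β_k) · β_l; moreover r_l(β_k) and β_l commute: r_l(β_k) · β_l = β_l · r_l(β_k). -/

import Mathlib

/-!
Formalization of identities in the Artin braid group `B_m`.

We encode "the identity `w₁ = w₂` holds in the braid group `B_m`" via the universal
property of the presented group: it holds in `B_m` iff for every group `G` and every
assignment `σ : ℕ → G` of the generators `σ_1, …, σ_{m-1}` satisfying the defining
braid relations of `B_m`, the corresponding products in `G` are equal.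

Braid words are recorded as lists of (1-based) generator indices; `wordProd σ w`
is the corresponding product.  The anti-automorphism `χ` (which fixes each
generator and reverses the order of the letters of a word) corresponds to
`List.reverse` on words, and the shift homomorphism `r_a : σ_i ↦ σ_{i+a}`
corresponds to `rWord a` on words.
-/

namespace Braid

variable {G : Type*} [Group G]

/-- The product in `G` of the braid word `w` (a list of 1-based generator indices). -/
def wordProd (σ : ℕ → G) (w : List ℕ) : G := (w.map σ).prod

/-- `σ 1, …, σ (m-1)` satisfy the defining relations of the Artin braid group `B_m`:
`σ_i σ_{i+1} σ_i = σ_{i+1} σ_i σ_{i+1}` for `1 ≤ i ≤ m-2`, and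
`σ_i σ_j = σ_j σ_i` for `|i - j| ≥ 2`, `1 ≤ i, j ≤ m-1`. -/
def IsBraidRep (m : ℕ) (σ : ℕ → G) : Prop :=
  (∀ i, 1 ≤ i → i + 2 ≤ m → σ i * σ (i + 1) * σ i = σ (i + 1) * σ i * σ (i + 1)) ∧
  (∀ i j, 1 ≤ i → i + 2 ≤ j → j + 1 ≤ m → σ i * σ j = σ j * σ i)

/-- The word `[1, 2, …, j]` representing `b_j = σ_1 σ_2 ⋯ σ_j` (with `b_0 = e`). -/
def bWord (j : ℕ) : List ℕ := List.range' 1 j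

/-- The word representing the superselection braid `β_n = b_{n-1} b_{n-2} ⋯ b_1`
(with `β_1 = β_0 = e`). -/
def betaWord : ℕ → List ℕ
  | 0 => []
  | n + 1 => bWord n ++ betaWord n

/-- The shift `r_a : σ_i ↦ σ_{i+a}` on braid words. -/
def rWord (a : ℕ) (w : List ℕ) : List ℕ := w.map (· + a)

/-- The word representing `t_{k,l} = r_0(χ(b_l)) · r_1(χ(b_l)) ⋯ r_{k-1}(χ(b_l))`,
the braid clockwise exchanging a block of `k` strands with a block of `l` strands. -/
def tWord : ℕ → ℕ → List ℕ
  | 0, _ => []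
  | k + 1, l => tWord k l ++ rWord k (bWord l).reverse

theorem wordProd_nil (σ : ℕ → G) : wordProd σ [] = 1 := rfl

theorem wordProd_cons (σ : ℕ → G) (i : ℕ) (w : List ℕ) :
    wordProd σ (i :: w) = σ i * wordProd σ w := by simp [wordProd]

theorem wordProd_append (σ : ℕ → G) (w₁ w₂ : List ℕ) :
    wordProd σ (w₁ ++ w₂) = wordProd σ w₁ * wordProd σ w₂ := by simp [wordProd]

theorem wordProd_singleton (σ : ℕ → G) (i : ℕ) : wordProd σ [i] = σ i := by
  simp [wordProd]

theorem bWord_succ (j : ℕ) : bWord (j + 1) = bWord j ++ [j + 1] := by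
  simp [bWord, List.range'_concat, Nat.add_comm]

theorem rev_bWord_succ (j : ℕ) : (bWord (j + 1)).reverse = (j + 1) :: (bWord j).reverse := by
  rw [bWord_succ]; simp

theorem mem_bWord {i j : ℕ} : i ∈ bWord j ↔ 1 ≤ i ∧ i ≤ j := by
  simp [bWord, List.mem_range'_1]; omega

theorem mem_betaWord {i n : ℕ} (h : i ∈ betaWord n) : 1 ≤ i ∧ i + 1 ≤ n := by
  induction n with
  | zero => simp [betaWord] at h
  | succ n ih =>
    simp only [betaWord, List.mem_append] at h
    rcases h with h | h
    · rw [mem_bWord] at h; omega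
    · have := ih h; omega

theorem mem_rWord {i a : ℕ} {w : List ℕ} :
    i ∈ rWord a w ↔ ∃ j ∈ w, j + a = i := by
  simp [rWord]

theorem commute_single {σ : ℕ → G} {a : ℕ} {w : List ℕ}
    (h : ∀ j ∈ w, σ a * σ j = σ j * σ a) :
    σ a * wordProd σ w = wordProd σ w * σ a := by
  induction w with
  | nil => simp [wordProd_nil]
  | cons b w ih =>
    rw [wordProd_cons, ← mul_assoc, h b (by simp), mul_assoc,
      ih (fun j hj => h j (by simp [hj])), mul_assoc]

theorem commute_wordProd {σ : ℕ → G} {w₁ w₂ : List ℕ}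
    (h : ∀ i ∈ w₁, ∀ j ∈ w₂, σ i * σ j = σ j * σ i) :
    wordProd σ w₁ * wordProd σ w₂ = wordProd σ w₂ * wordProd σ w₁ := by
  induction w₁ with
  | nil => simp [wordProd_nil]
  | cons a w ih =>
    rw [wordProd_cons, mul_assoc, ih (fun i hi => h i (by simp [hi])), ← mul_assoc,
      commute_single (h a (by simp)), mul_assoc]

theorem wordProd_rWord (σ : ℕ → G) (a : ℕ) (w : List ℕ) :
    wordProd σ (rWord a w) = wordProd (fun i => σ (i + a)) w := by
  simp only [wordProd, rWord, List.map_map]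
  rfl

theorem rWord_bWord (a c : ℕ) : rWord a (bWord c) = List.range' (1 + a) c := by
  have h1 : rWord a (bWord c) = List.map (fun x => a + x) (List.range' 1 c) := by
    simp only [rWord, bWord]
    exact List.map_congr_left (fun x _ => Nat.add_comm x a)
  rw [h1, List.map_add_range', Nat.add_comm a 1]

theorem isBraidRep_shift {m : ℕ} {σ : ℕ → G} (h : IsBraidRep m σ) {m' a : ℕ}
    (hma : m' + a ≤ m) : IsBraidRep m' (fun i => σ (i + a)) := by
  constructor
  · intro i h1 h2
    have := h.1 (i + a) (by omega) (by omega)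
    simp only []
    rw [show i + 1 + a = i + a + 1 by omega]
    exact this
  · intro i j h1 h2 h3
    exact h.2 (i + a) (j + a) (by omega) (by omega) (by omega)


/-- `σ (i+1) * b_j = b_j * σ i` for `1 ≤ i < j`, `j + 1 ≤ m`. -/
theorem sigma_bWord {m : ℕ} {σ : ℕ → G} (h : IsBraidRep m σ) {i j : ℕ}
    (h1 : 1 ≤ i) (hij : i + 1 ≤ j) :
    j + 1 ≤ m → σ (i + 1) * wordProd σ (bWord j) = wordProd σ (bWord j) * σ i := by
  induction j, hij using Nat.le_induction with
  | base =>
    intro hm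
    obtain ⟨i', rfl⟩ : ∃ i', i = i' + 1 := ⟨i - 1, by omega⟩
    rw [bWord_succ, bWord_succ, wordProd_append, wordProd_append, wordProd_singleton,
      wordProd_singleton]
    have hc : σ (i' + 1 + 1) * wordProd σ (bWord i') = wordProd σ (bWord i') * σ (i' + 1 + 1) := by
      apply commute_single
      intro t ht
      rw [mem_bWord] at ht
      exact (h.2 t (i' + 1 + 1) (by omega) (by omega) (by omega)).symm
    have hb := h.1 (i' + 1) (by omega) (by omega)
    calc σ (i' + 1 + 1) * (wordProd σ (bWord i') * σ (i' + 1) * σ (i' + 1 + 1))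
        = wordProd σ (bWord i') * (σ (i' + 1 + 1) * σ (i' + 1) * σ (i' + 1 + 1)) := by
          rw [← mul_assoc, ← mul_assoc, hc]; group
      _ = wordProd σ (bWord i') * (σ (i' + 1) * σ (i' + 1 + 1) * σ (i' + 1)) := by rw [← hb]
      _ = wordProd σ (bWord i') * σ (i' + 1) * σ (i' + 1 + 1) * σ (i' + 1) := by group
  | succ j hij ih =>
    intro hm
    have ihh := ih (by omega)
    rw [bWord_succ, wordProd_append, wordProd_singleton, ← mul_assoc, ihh]
    have : σ i * σ (j + 1) = σ (j + 1) * σ i := h.2 i (j + 1) h1 (by omega) (by omega)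
    rw [mul_assoc, this, ← mul_assoc]

/-- word version of `sigma_bWord`. -/
theorem rWord_one_bWord {m : ℕ} {σ : ℕ → G} (h : IsBraidRep m σ) {j : ℕ}
    (hm : j + 1 ≤ m) {w : List ℕ} (hw : ∀ i ∈ w, 1 ≤ i ∧ i + 1 ≤ j) :
    wordProd σ (rWord 1 w) * wordProd σ (bWord j) =
      wordProd σ (bWord j) * wordProd σ w := by
  induction w with
  | nil => simp [rWord, wordProd_nil]
  | cons a w ih =>
    have ha := hw a (by simp)
    have e : rWord 1 (a :: w) = (a + 1) :: rWord 1 w := rfl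
    rw [e, wordProd_cons, wordProd_cons, mul_assoc,
      ih (fun i hi => hw i (by simp [hi])), ← mul_assoc,
      sigma_bWord h ha.1 ha.2 hm, mul_assoc]

/-- `b_{n+1} * b_{n+1} = σ 1 * (b_{n+1} * b_n)`. -/
theorem bWord_sq {m : ℕ} {σ : ℕ → G} (h : IsBraidRep m σ) :
    ∀ n, n + 2 ≤ m →
      wordProd σ (bWord (n + 1)) * wordProd σ (bWord (n + 1)) =
        σ 1 * (wordProd σ (bWord (n + 1)) * wordProd σ (bWord n)) := by
  intro n
  induction n with
  | zero =>
    intro _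
    show wordProd σ [1] * wordProd σ [1] = σ 1 * (wordProd σ [1] * wordProd σ [])
    simp [wordProd]
  | succ n ih =>
    intro hm
    have ihh := ih (by omega)
    have e2 : wordProd σ (bWord (n + 2)) = wordProd σ (bWord (n + 1)) * σ (n + 2) := by
      rw [bWord_succ, wordProd_append, wordProd_singleton]
    have e1 : wordProd σ (bWord (n + 1)) = wordProd σ (bWord n) * σ (n + 1) := by
      rw [bWord_succ, wordProd_append, wordProd_singleton]
    have hs : σ (n + 2) * wordProd σ (bWord (n + 2)) =
        wordProd σ (bWord (n + 2)) * σ (n + 1) :=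
      sigma_bWord h (by omega) (by omega) (by omega)
    have hcomm : σ (n + 2) * wordProd σ (bWord n) = wordProd σ (bWord n) * σ (n + 2) := by
      apply commute_single
      intro t ht
      rw [mem_bWord] at ht
      exact (h.2 t (n + 2) (by omega) (by omega) (by omega)).symm
    calc wordProd σ (bWord (n + 2)) * wordProd σ (bWord (n + 2))
        = wordProd σ (bWord (n + 1)) * (σ (n + 2) * wordProd σ (bWord (n + 2))) := by
          rw [e2]; group
      _ = wordProd σ (bWord (n + 1)) * (wordProd σ (bWord (n + 1)) * σ (n + 2) * σ (n + 1)) := by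
          rw [hs, e2]
      _ = (wordProd σ (bWord (n + 1)) * wordProd σ (bWord (n + 1))) * (σ (n + 2) * σ (n + 1)) := by
          group
      _ = σ 1 * (wordProd σ (bWord (n + 1)) * (wordProd σ (bWord n) * σ (n + 2)) * σ (n + 1)) := by
          rw [ihh]; group
      _ = σ 1 * (wordProd σ (bWord (n + 1)) * (σ (n + 2) * wordProd σ (bWord n)) * σ (n + 1)) := by
          rw [hcomm]
      _ = σ 1 * ((wordProd σ (bWord (n + 1)) * σ (n + 2)) * (wordProd σ (bWord n) * σ (n + 1))) := by
          group
      _ = σ 1 * (wordProd σ (bWord (n + 2)) * wordProd σ (bWord (n + 1))) := by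
          rw [← e2, ← e1]

/-- Garside conjugation: `β_n σ_i = σ_{n-i} β_n`. -/
theorem beta_sigma {m : ℕ} {σ : ℕ → G} (h : IsBraidRep m σ) :
    ∀ n, n ≤ m → ∀ i, 1 ≤ i → i + 1 ≤ n →
      wordProd σ (betaWord n) * σ i = σ (n - i) * wordProd σ (betaWord n) := by
  intro n
  induction n with
  | zero => intro _ i h1 h2; omega
  | succ n ih =>
    intro hm i h1 h2
    have hdef : wordProd σ (betaWord (n + 1)) =
        wordProd σ (bWord n) * wordProd σ (betaWord n) := by
      show wordProd σ (bWord n ++ betaWord n) = _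
      exact wordProd_append σ _ _
    by_cases hc : i + 1 ≤ n
    · have hni : 1 ≤ n - i := by omega
      have hni2 : (n - i) + 1 ≤ n := by omega
      calc wordProd σ (betaWord (n + 1)) * σ i
          = wordProd σ (bWord n) * (wordProd σ (betaWord n) * σ i) := by rw [hdef]; group
        _ = wordProd σ (bWord n) * (σ (n - i) * wordProd σ (betaWord n)) := by
            rw [ih (by omega) i h1 hc]
        _ = (σ (n - i + 1) * wordProd σ (bWord n)) * wordProd σ (betaWord n) := by
            rw [← mul_assoc, ← sigma_bWord h hni hni2 (by omega)]
        _ = σ (n + 1 - i) * wordProd σ (betaWord (n + 1)) := by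
            rw [hdef, show n - i + 1 = n + 1 - i by omega]; group
    · have hi : i = n := by omega
      subst hi
      obtain ⟨p, rfl⟩ : ∃ p, i = p + 1 := ⟨i - 1, by omega⟩
      have hdef2 : wordProd σ (betaWord (p + 1)) =
          wordProd σ (bWord p) * wordProd σ (betaWord p) := by
        show wordProd σ (bWord p ++ betaWord p) = _
        exact wordProd_append σ _ _
      have hcomm : σ (p + 1) * wordProd σ (betaWord p) =
          wordProd σ (betaWord p) * σ (p + 1) := by
        apply commute_single
        intro t ht
        have := mem_betaWord ht
        exact (h.2 t (p + 1) (by omega) (by omega) (by omega)).symm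
      have hb : wordProd σ (bWord p) * σ (p + 1) = wordProd σ (bWord (p + 1)) := by
        rw [bWord_succ, wordProd_append, wordProd_singleton]
      calc wordProd σ (betaWord (p + 1 + 1)) * σ (p + 1)
          = wordProd σ (bWord (p + 1)) * (wordProd σ (bWord p) *
              (wordProd σ (betaWord p) * σ (p + 1))) := by rw [hdef, hdef2]; group
        _ = wordProd σ (bWord (p + 1)) * ((wordProd σ (bWord p) * σ (p + 1)) *
              wordProd σ (betaWord p)) := by rw [← hcomm]; group
        _ = wordProd σ (bWord (p + 1)) * wordProd σ (bWord (p + 1)) *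
              wordProd σ (betaWord p) := by rw [hb]; group
        _ = σ 1 * (wordProd σ (bWord (p + 1)) * wordProd σ (bWord p)) *
              wordProd σ (betaWord p) := by rw [bWord_sq h p (by omega)]
        _ = σ (p + 1 + 1 - (p + 1)) * wordProd σ (betaWord (p + 1 + 1)) := by
            rw [show p + 1 + 1 - (p + 1) = 1 by omega, hdef, hdef2]; group

/-- Word version of Garside conjugation. -/
theorem beta_word_conj {m : ℕ} {σ : ℕ → G} (h : IsBraidRep m σ) {n : ℕ} (hn : n ≤ m)
    {w : List ℕ} (hw : ∀ i ∈ w, 1 ≤ i ∧ i + 1 ≤ n) :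
    wordProd σ (betaWord n) * wordProd σ w =
      wordProd σ (w.map (fun i => n - i)) * wordProd σ (betaWord n) := by
  induction w with
  | nil => simp [wordProd_nil]
  | cons a w ih =>
    have ha := hw a (by simp)
    rw [wordProd_cons, List.map_cons, wordProd_cons, ← mul_assoc,
      beta_sigma h n hn a ha.1 ha.2, mul_assoc,
      ih (fun i hi => hw i (by simp [hi])), mul_assoc]

theorem mirror_betaWord {m : ℕ} {σ : ℕ → G} (h : IsBraidRep m σ) {n : ℕ} (hn : n ≤ m) :
    wordProd σ ((betaWord n).map (fun i => n - i)) = wordProd σ (betaWord n) := by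
  have := beta_word_conj h hn (w := betaWord n) (fun i hi => mem_betaWord hi)
  exact (mul_right_cancel this).symm

/-- `β_{n+1} = β_n * χ(b_n)`. -/
theorem betaWord_succ_rev {m : ℕ} {σ : ℕ → G} (h : IsBraidRep m σ) :
    ∀ n, n + 1 ≤ m →
      wordProd σ (betaWord (n + 1)) =
        wordProd σ (betaWord n) * wordProd σ ((bWord n).reverse) := by
  intro n
  induction n with
  | zero => intro _; simp [betaWord, bWord, wordProd_nil]
  | succ n ih =>
    intro hm
    have ihh := ih (by omega)
    have hdef : wordProd σ (betaWord (n + 1 + 1)) =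
        wordProd σ (bWord (n + 1)) * wordProd σ (betaWord (n + 1)) := by
      show wordProd σ (bWord (n + 1) ++ betaWord (n + 1)) = _
      exact wordProd_append σ _ _
    have hb : wordProd σ (bWord (n + 1)) = wordProd σ (bWord n) * σ (n + 1) := by
      rw [bWord_succ, wordProd_append, wordProd_singleton]
    have hcomm : σ (n + 1) * wordProd σ (betaWord n) =
        wordProd σ (betaWord n) * σ (n + 1) := by
      apply commute_single
      intro t ht
      have := mem_betaWord ht
      exact (h.2 t (n + 1) (by omega) (by omega) (by omega)).symm
    have hdefn : wordProd σ (betaWord (n + 1)) =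
        wordProd σ (bWord n) * wordProd σ (betaWord n) := by
      show wordProd σ (bWord n ++ betaWord n) = _
      exact wordProd_append σ _ _
    calc wordProd σ (betaWord (n + 1 + 1))
        = wordProd σ (bWord n) * (σ (n + 1) * wordProd σ (betaWord n)) *
            wordProd σ ((bWord n).reverse) := by rw [hdef, hb, ihh]; group
      _ = wordProd σ (bWord n) * wordProd σ (betaWord n) *
            (σ (n + 1) * wordProd σ ((bWord n).reverse)) := by rw [hcomm]; group
      _ = wordProd σ (betaWord (n + 1)) * wordProd σ ((bWord (n + 1)).reverse) := by
          rw [rev_bWord_succ, wordProd_cons, hdefn]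

/-- mirror of `χ(b_c)` is `b_c`. -/
theorem mirror_rev_bWord : ∀ c, ((bWord c).reverse).map (fun i => c + 1 - i) = bWord c := by
  intro c
  induction c with
  | zero => rfl
  | succ c ih =>
    rw [rev_bWord_succ, List.map_cons]
    have h1 : ((bWord c).reverse).map (fun i => c + 1 + 1 - i) =
        (((bWord c).reverse).map (fun i => c + 1 - i)).map (fun x => x + 1) := by
      rw [List.map_map]
      apply List.map_congr_left
      intro x hx
      have hb := mem_bWord.mp (List.mem_reverse.mp hx)
      simp only [Function.comp_apply]
      omega
    rw [h1, ih]
    have h2 : (bWord c).map (fun x => x + 1) = List.range' 2 c := by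
      have := rWord_bWord 1 c
      simpa [rWord] using this
    rw [h2, show c + 1 + 1 - (c + 1) = 1 by omega]
    show _ = List.range' 1 (c + 1)
    rw [List.range'_succ]


theorem rWord_cons (a x : ℕ) (xs : List ℕ) :
    rWord a (x :: xs) = (x + a) :: rWord a xs := rfl

theorem rWord_append (a : ℕ) (w₁ w₂ : List ℕ) :
    rWord a (w₁ ++ w₂) = rWord a w₁ ++ rWord a w₂ := List.map_append

private theorem hb_abstract {β X Bp s Prev : G}
    (hL1 : X * β = β * (s * Prev)) (hG : β * Prev = Bp * β) :
    β * s = X * Bp⁻¹ * β := by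
  have ePrev : Prev = β⁻¹ * (Bp * β) := by rw [← hG]; group
  have h5 : β * s * Prev = X * β := by rw [hL1]; group
  have h6 := eq_mul_inv_of_mul_eq h5
  rw [h6, ePrev]; group

private theorem star_abstract {β X Bp Bl R T Qp Ql s : G}
    (hb : β * s = X * Bp⁻¹ * β)
    (hc : β * T = Bl * β)
    (hQp : Qp * X = X * Bp)
    (hQl : Ql * X = X * Bl)
    (h3 : Ql * R = Qp) :
    R * β * (s * T) = X * β := by
  have hXp : X * Bp⁻¹ = Qp⁻¹ * X := by
    calc X * Bp⁻¹ = Qp⁻¹ * (Qp * X) * Bp⁻¹ := by group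
      _ = Qp⁻¹ * (X * Bp) * Bp⁻¹ := by rw [hQp]
      _ = Qp⁻¹ * X := by group
  calc R * β * (s * T)
      = R * (β * s) * T := by group
    _ = R * (X * Bp⁻¹ * β) * T := by rw [hb]
    _ = R * (X * Bp⁻¹) * (β * T) := by group
    _ = R * (X * Bp⁻¹) * (Bl * β) := by rw [hc]
    _ = R * (Qp⁻¹ * X) * (Bl * β) := by rw [hXp]
    _ = Ql⁻¹ * (X * Bl) * β := by rw [← h3]; group
    _ = Ql⁻¹ * (Ql * X) * β := by rw [hQl]
    _ = X * β := by group

/-- The key lemma: `r_l(b_k) * β_{k+l} * r_k(χ(b_l)) = b_{k+l} * β_{k+l}`. -/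
theorem star {m : ℕ} {σ : ℕ → G} (h : IsBraidRep m σ) (k l : ℕ) (hl : 1 ≤ l)
    (hm : k + l + 1 ≤ m) :
    wordProd σ (rWord l (bWord k)) * wordProd σ (betaWord (k + l)) *
      wordProd σ (rWord k ((bWord l).reverse)) =
    wordProd σ (bWord (k + l)) * wordProd σ (betaWord (k + l)) := by
  obtain ⟨l', rfl⟩ : ∃ l', l = l' + 1 := ⟨l - 1, by omega⟩
  have hm' : (k + l') + 2 ≤ m := by omega
  rw [show k + (l' + 1) = (k + l') + 1 by omega]
  -- rewrite the right factor
  have h_e1 : wordProd σ (rWord k ((bWord (l' + 1)).reverse)) =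
      σ ((k + l') + 1) * wordProd σ (rWord k ((bWord l').reverse)) := by
    rw [rev_bWord_succ, rWord_cons, wordProd_cons, show l' + 1 + k = (k + l') + 1 by omega]
  rw [h_e1]
  -- hG : β * P(χ b_p) = B_p * β
  have hG : wordProd σ (betaWord ((k + l') + 1)) * wordProd σ ((bWord (k + l')).reverse) =
      wordProd σ (bWord (k + l')) * wordProd σ (betaWord ((k + l') + 1)) := by
    have hbound : ∀ i ∈ (bWord (k + l')).reverse, 1 ≤ i ∧ i + 1 ≤ (k + l') + 1 := by
      intro i hi
      have := mem_bWord.mp (List.mem_reverse.mp hi)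
      omega
    have := beta_word_conj h (show (k + l') + 1 ≤ m by omega) hbound
    rw [mirror_rev_bWord] at this
    exact this
  -- hL1 : X * β = β * (σ (p+1) * P(χ b_p))
  have hL1 : wordProd σ (bWord ((k + l') + 1)) * wordProd σ (betaWord ((k + l') + 1)) =
      wordProd σ (betaWord ((k + l') + 1)) *
        (σ ((k + l') + 1) * wordProd σ ((bWord (k + l')).reverse)) := by
    have h1 : wordProd σ (betaWord ((k + l') + 1 + 1)) =
        wordProd σ (bWord ((k + l') + 1)) * wordProd σ (betaWord ((k + l') + 1)) := by
      show wordProd σ (bWord ((k + l') + 1) ++ betaWord ((k + l') + 1)) = _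
      exact wordProd_append σ _ _
    have h2 := betaWord_succ_rev h ((k + l') + 1) (by omega)
    rw [h1, rev_bWord_succ, wordProd_cons] at h2
    exact h2
  have hb := hb_abstract hL1 hG
  -- hc : β * T = B_{l'} * β
  have hc : wordProd σ (betaWord ((k + l') + 1)) * wordProd σ (rWord k ((bWord l').reverse)) =
      wordProd σ (bWord l') * wordProd σ (betaWord ((k + l') + 1)) := by
    have hbound : ∀ i ∈ rWord k ((bWord l').reverse), 1 ≤ i ∧ i + 1 ≤ (k + l') + 1 := by
      intro i hi
      rw [mem_rWord] at hi
      obtain ⟨j, hj, rfl⟩ := hi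
      have := mem_bWord.mp (List.mem_reverse.mp hj)
      omega
    have hmap : (rWord k ((bWord l').reverse)).map (fun i => (k + l') + 1 - i) = bWord l' := by
      have e : (rWord k ((bWord l').reverse)).map (fun i => (k + l') + 1 - i) =
          ((bWord l').reverse).map (fun i => l' + 1 - i) := by
        simp only [rWord, List.map_map]
        apply List.map_congr_left
        intro x hx
        simp only [Function.comp_apply]
        omega
      rw [e, mirror_rev_bWord]
    have := beta_word_conj h (show (k + l') + 1 ≤ m by omega) hbound
    rw [hmap] at this
    exact this
  have hQp : wordProd σ (rWord 1 (bWord (k + l'))) * wordProd σ (bWord ((k + l') + 1)) =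
      wordProd σ (bWord ((k + l') + 1)) * wordProd σ (bWord (k + l')) := by
    apply rWord_one_bWord h (show (k + l') + 1 + 1 ≤ m by omega)
    intro i hi
    have := mem_bWord.mp hi
    omega
  have hQl : wordProd σ (rWord 1 (bWord l')) * wordProd σ (bWord ((k + l') + 1)) =
      wordProd σ (bWord ((k + l') + 1)) * wordProd σ (bWord l') := by
    apply rWord_one_bWord h (show (k + l') + 1 + 1 ≤ m by omega)
    intro i hi
    have := mem_bWord.mp hi
    omega
  have h3 : wordProd σ (rWord 1 (bWord l')) * wordProd σ (rWord (l' + 1) (bWord k)) =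
      wordProd σ (rWord 1 (bWord (k + l'))) := by
    rw [← wordProd_append]
    congr 1
    rw [rWord_bWord, rWord_bWord, rWord_bWord]
    have hr := List.range'_append (s := 1 + 1) (m := l') (n := k) (step := 1)
    simp only [one_mul] at hr
    rw [show 1 + (l' + 1) = 1 + 1 + l' by omega, hr, Nat.add_comm l' k]
  exact star_abstract hb hc hQp hQl h3

/-- Part (i): `β_{k+l} = r_l(β_k) * β_l * t_{k,l}`. -/
theorem partI {m : ℕ} {σ : ℕ → G} (h : IsBraidRep m σ) (k l : ℕ) (hl : 1 ≤ l) :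
    k + l ≤ m →
    wordProd σ (betaWord (k + l)) =
      wordProd σ (rWord l (betaWord k)) * wordProd σ (betaWord l) *
        wordProd σ (tWord k l) := by
  induction k with
  | zero =>
    intro _
    simp only [Nat.zero_add]
    show wordProd σ (betaWord l) =
      wordProd σ (rWord l []) * wordProd σ (betaWord l) * wordProd σ []
    simp [rWord, wordProd_nil]
  | succ k ih =>
    intro hm
    have hkl : k + l + 1 ≤ m := by omega
    have hih := ih (by omega)
    rw [show k + 1 + l = (k + l) + 1 by omega]
    have hdef : wordProd σ (betaWord ((k + l) + 1)) =
        wordProd σ (bWord (k + l)) * wordProd σ (betaWord (k + l)) := by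
      show wordProd σ (bWord (k + l) ++ betaWord (k + l)) = _
      exact wordProd_append σ _ _
    rw [hdef, ← star h k l hl hkl, hih]
    have ht : wordProd σ (tWord (k + 1) l) =
        wordProd σ (tWord k l) * wordProd σ (rWord k ((bWord l).reverse)) := by
      show wordProd σ (tWord k l ++ rWord k ((bWord l).reverse)) = _
      exact wordProd_append σ _ _
    have hbeta : wordProd σ (rWord l (betaWord (k + 1))) =
        wordProd σ (rWord l (bWord k)) * wordProd σ (rWord l (betaWord k)) := by
      show wordProd σ (rWord l (bWord k ++ betaWord k)) = _
      rw [rWord_append, wordProd_append]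
    rw [ht, hbeta]
    group

private theorem partII_abstract {βm βk Q R Bl T : G}
    (hpI : βm = Q * βk * T)
    (hconj : βm * (R * Bl) = βk * Q * βm)
    (hcomm : βk * Q = Q * βk) :
    βm = T * (R * Bl) := by
  have hT : T = βk⁻¹ * Q⁻¹ * βm := by rw [hpI]; group
  rw [hT]
  calc βm = βk⁻¹ * Q⁻¹ * (βk * Q) * βm := by rw [hcomm]; group
    _ = βk⁻¹ * Q⁻¹ * (βk * Q * βm) := by group
    _ = βk⁻¹ * Q⁻¹ * (βm * (R * Bl)) := by rw [hconj]
    _ = βk⁻¹ * Q⁻¹ * βm * (R * Bl) := by group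

/-- Let `k, l ≥ 1` with `k + l ≥ 2`.  In the braid group `B_{k+l}`:
(i) `β_{k+l} = r_l(β_k) ⬝ β_l ⬝ t_{k,l}`; (ii) `β_{k+l} = t_{l,k} ⬝ r_l(β_k) ⬝ β_l`;
moreover `r_l(β_k)` and `β_l` commute. -/
theorem beta_factorization (k l : ℕ) (hk : 1 ≤ k) (hl : 1 ≤ l) (hkl : 2 ≤ k + l)
    (σ : ℕ → G) (h : IsBraidRep (k + l) σ) :
    (wordProd σ (betaWord (k + l)) =
      wordProd σ (rWord l (betaWord k)) * wordProd σ (betaWord l) *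
        wordProd σ (tWord k l)) ∧
    (wordProd σ (betaWord (k + l)) =
      wordProd σ (tWord l k) *
        (wordProd σ (rWord l (betaWord k)) * wordProd σ (betaWord l))) ∧
    wordProd σ (rWord l (betaWord k)) * wordProd σ (betaWord l) =
      wordProd σ (betaWord l) * wordProd σ (rWord l (betaWord k)) := by
  have hcomm3 : wordProd σ (rWord l (betaWord k)) * wordProd σ (betaWord l) =
      wordProd σ (betaWord l) * wordProd σ (rWord l (betaWord k)) := by
    apply commute_wordProd
    intro i hi j hj
    rw [mem_rWord] at hi
    obtain ⟨i', hi', rfl⟩ := hi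
    have h1 := mem_betaWord hi'
    have h2 := mem_betaWord hj
    exact (h.2 j (i' + l) (by omega) (by omega) (by omega)).symm
  refine ⟨partI h k l hl le_rfl, ?_, hcomm3⟩
  -- part (ii)
  have pI_lk := partI h l k hk (by omega)
  rw [show l + k = k + l by omega] at pI_lk
  have hbound : ∀ i ∈ rWord l (betaWord k) ++ betaWord l, 1 ≤ i ∧ i + 1 ≤ k + l := by
    intro i hi
    rw [List.mem_append] at hi
    rcases hi with hi | hi
    · rw [mem_rWord] at hi
      obtain ⟨j, hj, rfl⟩ := hi
      have := mem_betaWord hj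
      omega
    · have := mem_betaWord hi
      omega
  have conj := beta_word_conj h (le_refl (k + l)) hbound
  rw [wordProd_append, List.map_append, wordProd_append] at conj
  have m1 : wordProd σ ((rWord l (betaWord k)).map (fun i => k + l - i)) =
      wordProd σ (betaWord k) := by
    have e : (rWord l (betaWord k)).map (fun i => k + l - i) =
        (betaWord k).map (fun i => k - i) := by
      simp only [rWord, List.map_map]
      apply List.map_congr_left
      intro x hx
      simp only [Function.comp_apply]
      omega
    rw [e]
    exact mirror_betaWord h (by omega)
  have m2 : wordProd σ ((betaWord l).map (fun i => k + l - i)) =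
      wordProd σ (rWord k (betaWord l)) := by
    have e : (betaWord l).map (fun i => k + l - i) =
        rWord k ((betaWord l).map (fun i => l - i)) := by
      simp only [rWord, List.map_map]
      apply List.map_congr_left
      intro x hx
      have := mem_betaWord hx
      simp only [Function.comp_apply]
      omega
    rw [e, wordProd_rWord, wordProd_rWord]
    exact mirror_betaWord (isBraidRep_shift h (by omega)) (le_refl l)
  rw [m1, m2] at conj
  have hcomm2 : wordProd σ (betaWord k) * wordProd σ (rWord k (betaWord l)) =
      wordProd σ (rWord k (betaWord l)) * wordProd σ (betaWord k) := by
    apply commute_wordProd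
    intro i hi j hj
    rw [mem_rWord] at hj
    obtain ⟨j', hj', rfl⟩ := hj
    have h1 := mem_betaWord hi
    have h2 := mem_betaWord hj'
    exact h.2 i (j' + k) (by omega) (by omega) (by omega)
  exact partII_abstract pI_lk conj hcomm2

end Braid
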